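/- If Δ ⊆ 𝔽₂⁴ is a block for the action of Aut(AQ_4) on the vertices of the augmented cube graph AQ_4 with 0000 ∈ Δ and 1 < |Δ| < 16, then Δ is one of the following three sets: {0000, 0100}; {0000, 0100, 0011, 0111}; or {0000, 0100, 0011, 0111, 1001, 1010, 1101, 1110}. -/

import Mathlib

/-- The standard basis vector `e_j` of `𝔽₂ⁿ`. -/
def stdBasis (n : ℕ) (j : Fin n) : Fin n → ZMod 2 := fun i => if i = j then 1 else 0

/-- The vector `v_k` of `𝔽₂ⁿ` having `1` in its last `k` coordinates and `0` elsewhere. -/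
def lastOnes (n k : ℕ) : Fin n → ZMod 2 := fun i => if n - k ≤ i.val then 1 else 0

/-- The generating set `S_n` of the augmented cube. -/
def genSet (n : ℕ) : Set (Fin n → ZMod 2) :=
  {x | (∃ j : Fin n, x = stdBasis n j) ∨ ∃ k : ℕ, 2 ≤ k ∧ k ≤ n ∧ x = lastOnes n k}

/-- The augmented cube graph `AQ_n`. -/
def AQ (n : ℕ) : SimpleGraph (Fin n → ZMod 2) where
  Adj x y := x ≠ y ∧ x + y ∈ genSet n
  symm := ⟨fun x y h => ⟨h.1.symm, by rw [add_comm]; exact h.2⟩⟩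
  loopless := ⟨fun x h => h.1 rfl⟩

/-!
Translations are automorphisms of `AQ_4`, so a block containing `0` is closed under addition,
i.e. it is an `𝔽₂`-subspace. It is also stable under every automorphism fixing `0`, in particular
under the linear automorphism `1 + N` with `N x = (x₁ + x₃ + x₄, x₄, x₃ + x₄, x₁)`, which permutes
`S_4`. This `N` is nilpotent with one-dimensional kernel (a single Jordan block), and the only
`N`-stable subspaces are the kernels `ker Nᵐ`, `m ≤ 4`, of sizes `1, 2, 4, 8, 16`.
-/

open MulAction Pointwise

namespace Module.End

variable {K V : Type*} [Field K] [AddCommGroup V] [Module K V] {N : Module.End K V} {e : V}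

theorem exists_eq_smul_of_mem_ker (hN : LinearMap.ker N = K ∙ e) {u v : V}
    (hu : u ∈ LinearMap.ker N) (hv : v ∈ LinearMap.ker N) (hu0 : u ≠ 0) : ∃ c : K, v = c • u := by
  rw [hN, Submodule.mem_span_singleton] at hu hv
  obtain ⟨a, rfl⟩ := hu
  obtain ⟨b, rfl⟩ := hv
  have ha : a ≠ 0 := by rintro rfl; simp at hu0
  exact ⟨b / a, by rw [smul_smul, div_mul_cancel₀ b ha]⟩

theorem pow_apply_mem_ker {k : ℕ} {x : V} (hx : (N ^ (k + 1)) x = 0) :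
    (N ^ k) x ∈ LinearMap.ker N := by
  rwa [LinearMap.mem_ker, ← Module.End.mul_apply, ← pow_succ']

variable {W : Submodule K V}

theorem ker_pow_succ_le_of_ker_pow_le (hN : LinearMap.ker N = K ∙ e) {k : ℕ} {x : V}
    (hxW : x ∈ W) (hx : (N ^ (k + 1)) x = 0) (hx0 : (N ^ k) x ≠ 0)
    (hk : LinearMap.ker (N ^ k) ≤ W) :
    LinearMap.ker (N ^ (k + 1)) ≤ W := by
  intro y hy
  -- `Nᵏ` maps `ker Nᵏ⁺¹` into the line `ker N`, where `Nᵏ x ≠ 0` spans it.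
  obtain ⟨c, hc⟩ := exists_eq_smul_of_mem_ker hN (pow_apply_mem_ker hx) (pow_apply_mem_ker hy) hx0
  have hyx : y - c • x ∈ LinearMap.ker (N ^ k) := by
    rw [LinearMap.mem_ker, map_sub, map_smul, hc, sub_self]
  simpa using W.add_mem (hk hyx) (W.smul_mem c hxW)

theorem ker_pow_succ_le_of_mem (hN : LinearMap.ker N = K ∙ e) (hW : ∀ x ∈ W, N x ∈ W) (k : ℕ)
    {x : V} (hxW : x ∈ W) (hx : (N ^ (k + 1)) x = 0) (hx0 : (N ^ k) x ≠ 0) :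
    LinearMap.ker (N ^ (k + 1)) ≤ W := by
  induction k generalizing x with
  | zero => exact ker_pow_succ_le_of_ker_pow_le hN hxW hx hx0 (by simp [Module.End.one_eq_id])
  | succ k ih =>
    refine ker_pow_succ_le_of_ker_pow_le hN hxW hx hx0 (ih (hW x hxW) ?_ ?_) <;>
      rwa [← Module.End.mul_apply, ← pow_succ]

theorem exists_eq_ker_pow (hN : LinearMap.ker N = K ∙ e) {n : ℕ} (hn : N ^ n = 0)
    (hW : ∀ x ∈ W, N x ∈ W) : ∃ m ≤ n, W = LinearMap.ker (N ^ m) := by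
  classical
  have hex : ∃ m, W ≤ LinearMap.ker (N ^ m) := ⟨n, by simp [hn]⟩
  refine ⟨Nat.find hex, Nat.find_min' hex (by simp [hn]), ?_⟩
  have hW_le := Nat.find_spec hex
  rcases hm : Nat.find hex with _ | k
  · rw [hm] at hW_le
    exact le_antisymm hW_le (by simp [Module.End.one_eq_id])
  · rw [hm] at hW_le
    obtain ⟨x, hxW, hx0⟩ := SetLike.not_le_iff_exists.mp (Nat.find_min hex (m := k) (by omega))
    exact le_antisymm hW_le (ker_pow_succ_le_of_mem hN hW k hxW (hW_le hxW) hx0)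

end Module.End

namespace AQ

variable {n : ℕ}

def translate (a : Fin n → ZMod 2) : AQ n ≃g AQ n where
  toEquiv := Equiv.addRight a
  map_rel_iff' {x y} := by
    simp [AQ, add_add_add_comm x a y, ZModModule.add_self]

@[simp]
theorem translate_apply (a x : Fin n → ZMod 2) : translate a x = x + a := rfl

def ofLinearEquiv (f : (Fin n → ZMod 2) ≃ₗ[ZMod 2] (Fin n → ZMod 2))
    (hf : ∀ s, f s ∈ genSet n ↔ s ∈ genSet n) : AQ n ≃g AQ n where
  toEquiv := f.toEquiv
  map_rel_iff' {x y} := by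
    simp [AQ, ← map_add, hf]

variable {Δ : Set (Fin n → ZMod 2)}

theorem isBlock_iff_image_eq_or_disjoint : IsBlock (AQ n ≃g AQ n) Δ ↔
    ∀ g : AQ n ≃g AQ n, ⇑g '' Δ = Δ ∨ Disjoint (⇑g '' Δ) Δ := by
  simp only [isBlock_iff_smul_eq_or_disjoint, ← Set.image_smul, RelIso.smul_def]

theorem add_mem_of_isBlock (hΔ : IsBlock (AQ n ≃g AQ n) Δ) (h0 : 0 ∈ Δ) {a b : Fin n → ZMod 2}
    (ha : a ∈ Δ) (hb : b ∈ Δ) : b + a ∈ Δ := by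
  have h : translate a • Δ = Δ := hΔ.smul_eq_of_mem h0 (by simpa using ha)
  exact h ▸ Set.smul_mem_smul_set hb

def blockSubmodule (hΔ : IsBlock (AQ n ≃g AQ n) Δ) (h0 : 0 ∈ Δ) :
    Submodule (ZMod 2) (Fin n → ZMod 2) :=
  AddSubgroup.toZModSubmodule 2
    { carrier := Δ
      add_mem' := fun ha hb => add_mem_of_isBlock hΔ h0 hb ha
      zero_mem' := h0
      neg_mem' := fun hx => by rwa [ZModModule.neg_eq_self] }

@[simp]
theorem coe_blockSubmodule (hΔ : IsBlock (AQ n ≃g AQ n) Δ) (h0 : 0 ∈ Δ) :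
    (blockSubmodule hΔ h0 : Set (Fin n → ZMod 2)) = Δ := rfl

end AQ

namespace AQ4

open AQ

def nilpotentPart : Module.End (ZMod 2) (Fin 4 → ZMod 2) where
  toFun x := ![x 0 + x 2 + x 3, x 3, x 2 + x 3, x 0]
  map_add' := by decide
  map_smul' := by decide

theorem nilpotentPart_pow_four : nilpotentPart ^ 4 = 0 :=
  LinearMap.ext fun x => by rw [Module.End.pow_apply]; revert x; decide

theorem ker_nilpotentPart : LinearMap.ker nilpotentPart = ZMod 2 ∙ ![0, 1, 0, 0] := by
  ext x
  rw [LinearMap.mem_ker, Submodule.mem_span_singleton]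
  revert x; decide

theorem genSet_four : genSet 4 =
    {![1,0,0,0], ![0,1,0,0], ![0,0,1,0], ![0,0,0,1], ![0,0,1,1], ![0,1,1,1], ![1,1,1,1]} := by
  ext x
  simp only [genSet, Set.mem_ofPred_eq, Set.mem_insert_iff, Set.mem_singleton_iff]
  constructor
  · rintro (⟨j, rfl⟩ | ⟨k, hk2, hk4, rfl⟩)
    · fin_cases j <;> decide
    · interval_cases k <;> decide
  · rintro (rfl | rfl | rfl | rfl | rfl | rfl | rfl)
    exacts [Or.inl ⟨0, by decide⟩, Or.inl ⟨1, by decide⟩, Or.inl ⟨2, by decide⟩,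
      Or.inl ⟨3, by decide⟩, Or.inr ⟨2, by decide⟩, Or.inr ⟨3, by decide⟩, Or.inr ⟨4, by decide⟩]

theorem isUnit_one_add_nilpotentPart : IsUnit (1 + nilpotentPart) :=
  IsNilpotent.isUnit_one_add ⟨4, nilpotentPart_pow_four⟩

theorem one_add_nilpotentPart_mem_genSet_iff (s : Fin 4 → ZMod 2) :
    (1 + nilpotentPart) s ∈ genSet 4 ↔ s ∈ genSet 4 := by
  rw [LinearMap.add_apply, Module.End.one_apply, genSet_four]
  simp only [Set.mem_insert_iff, Set.mem_singleton_iff]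
  revert s; decide

noncomputable def unipotentAut : AQ 4 ≃g AQ 4 :=
  ofLinearEquiv (LinearMap.GeneralLinearGroup.toLinearEquiv isUnit_one_add_nilpotentPart.unit)
    one_add_nilpotentPart_mem_genSet_iff

theorem unipotentAut_apply (x : Fin 4 → ZMod 2) : unipotentAut x = x + nilpotentPart x := rfl

variable {Δ : Set (Fin 4 → ZMod 2)}

theorem nilpotentPart_mem_blockSubmodule (hΔ : IsBlock (AQ 4 ≃g AQ 4) Δ) (h0 : 0 ∈ Δ) :
    ∀ x ∈ blockSubmodule hΔ h0, nilpotentPart x ∈ blockSubmodule hΔ h0 := by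
  intro x hx
  have h : unipotentAut • Δ = Δ := hΔ.smul_eq_of_mem h0 (by simpa [unipotentAut_apply] using h0)
  have hgx : unipotentAut x ∈ blockSubmodule hΔ h0 := by
    rw [← SetLike.mem_coe, coe_blockSubmodule, ← h]
    exact Set.smul_mem_smul_set hx
  simpa [unipotentAut_apply] using (blockSubmodule hΔ h0).sub_mem hgx hx

theorem coe_ker_nilpotentPart_pow_one :
    (LinearMap.ker (nilpotentPart ^ 1) : Set (Fin 4 → ZMod 2)) = {![0,0,0,0], ![0,1,0,0]} := by
  ext x
  simp only [SetLike.mem_coe, LinearMap.mem_ker, Module.End.pow_apply, Set.mem_insert_iff,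
    Set.mem_singleton_iff]
  revert x; decide

theorem coe_ker_nilpotentPart_pow_two :
    (LinearMap.ker (nilpotentPart ^ 2) : Set (Fin 4 → ZMod 2)) =
      {![0,0,0,0], ![0,1,0,0], ![0,0,1,1], ![0,1,1,1]} := by
  ext x
  simp only [SetLike.mem_coe, LinearMap.mem_ker, Module.End.pow_apply, Set.mem_insert_iff,
    Set.mem_singleton_iff]
  revert x; decide

theorem coe_ker_nilpotentPart_pow_three :
    (LinearMap.ker (nilpotentPart ^ 3) : Set (Fin 4 → ZMod 2)) =
      {![0,0,0,0], ![0,1,0,0], ![0,0,1,1], ![0,1,1,1],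
        ![1,0,0,1], ![1,0,1,0], ![1,1,0,1], ![1,1,1,0]} := by
  ext x
  simp only [SetLike.mem_coe, LinearMap.mem_ker, Module.End.pow_apply, Set.mem_insert_iff,
    Set.mem_singleton_iff]
  revert x; decide

end AQ4

/-- The only nontrivial blocks of `Aut(AQ_4)` acting on the vertices of `AQ_4`
that contain the zero vertex are `{0000, 0100}`, `{0000, 0100, 0011, 0111}` and
`{0000, 0100, 0011, 0111, 1001, 1010, 1101, 1110}`. -/
theorem AQ4_blocks_classification (Δ : Set (Fin 4 → ZMod 2))
    (hblock : ∀ g : AQ 4 ≃g AQ 4, ⇑g '' Δ = Δ ∨ Disjoint (⇑g '' Δ) Δ)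
    (h0 : (![0,0,0,0] : Fin 4 → ZMod 2) ∈ Δ)
    (h1 : 1 < Δ.ncard) (h16 : Δ.ncard < 16) :
    Δ = ({![0,0,0,0], ![0,1,0,0]} : Set (Fin 4 → ZMod 2)) ∨
    Δ = ({![0,0,0,0], ![0,1,0,0], ![0,0,1,1], ![0,1,1,1]} : Set (Fin 4 → ZMod 2)) ∨
    Δ = ({![0,0,0,0], ![0,1,0,0], ![0,0,1,1], ![0,1,1,1],
          ![1,0,0,1], ![1,0,1,0], ![1,1,0,1], ![1,1,1,0]} : Set (Fin 4 → ZMod 2)) := by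
  have hB := AQ.isBlock_iff_image_eq_or_disjoint.mpr hblock
  have h0' : (0 : Fin 4 → ZMod 2) ∈ Δ := (show (![0,0,0,0] : Fin 4 → ZMod 2) = 0 by decide) ▸ h0
  obtain ⟨m, hm4, hm⟩ := Module.End.exists_eq_ker_pow AQ4.ker_nilpotentPart
    AQ4.nilpotentPart_pow_four (AQ4.nilpotentPart_mem_blockSubmodule hB h0')
  replace hm : Δ = LinearMap.ker (AQ4.nilpotentPart ^ m) := by simpa using congrArg SetLike.coe hm
  interval_cases m
  · simp [hm, Module.End.one_eq_id] at h1
  · exact Or.inl (hm.trans AQ4.coe_ker_nilpotentPart_pow_one)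
  · exact Or.inr (Or.inl (hm.trans AQ4.coe_ker_nilpotentPart_pow_two))
  · exact Or.inr (Or.inr (hm.trans AQ4.coe_ker_nilpotentPart_pow_three))
  · simp [hm, AQ4.nilpotentPart_pow_four] at h16
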